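/- arXiv:2106.10883 — 4 statements merged into one kernel-verified Lean document; each statement's English description precedes it below -/
import Mathlib

section
/- Let χ : ℝ → ℝ be nondecreasing, convex, and bounded on (-∞, 0], with χ(0) = 0 and left derivative χ'(0) = 1, and let g(s) = χ''(-s) be the associated Lebesgue–Stieltjes measure on [0,∞). Then for every t ≤ 0, χ(t) = ∫₀^∞ max(t, -s) g(s) ds. -/
/-!
Write `D x` for the left derivative of `χ`, so that `f v = -D (-v)` for `v ≥ 0`. Convexity
gives `0 ≤ D x ≤ χ (x + 1) - χ x`, and `χ` converges at `-∞`, so `f → 0` at `+∞`; as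
`f = f 0 = -1` on `(-∞, 0]`, the measure `df` has total mass `1` on `[0, ∞)`. Writing
`max t (-s) = t + (-t - s)⁺`, the layer-cake formula turns `∫_{[0, -t)} (-t - s) df(s)` into
`∫_0^{-t} (f v + 1) dv`, and `∫_0^{-t} f = -∫_t^0 D = χ t` by the fundamental theorem of
calculus: a convex function is differentiable, with derivative `D`, off the countable set where
`D` jumps.
-/

open Filter MeasureTheory Set Topology

namespace ConvexOn

section interior

variable {S : Set ℝ} {f : ℝ → ℝ}

lemma countable_leftDeriv_lt_rightDeriv (hf : ConvexOn ℝ S f) :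
    {x ∈ interior S | derivWithin f (Iio x) x < derivWithin f (Ioi x) x}.Countable := by
  refine (countable_image_lt_image_Ioi_within (interior S)
    fun x ↦ derivWithin f (Iio x) x).mono ?_
  rintro x ⟨hx, hlt⟩
  refine ⟨hx, _, hlt, fun y hy hxy ↦ ?_⟩
  exact (hf.rightDeriv_le_slope_of_mem_interior hx (interior_subset hy) hxy).trans
    (hf.slope_le_leftDeriv_of_mem_interior (interior_subset hx) hy hxy)

lemma hasDerivAt_leftDeriv (hf : ConvexOn ℝ S f) {x : ℝ} (hx : x ∈ interior S)
    (h : derivWithin f (Iio x) x = derivWithin f (Ioi x) x) :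
    HasDerivAt f (derivWithin f (Iio x) x) x := by
  rw [hasDerivAt_iff_tendsto_slope_left_right]
  constructor
  · exact (hasDerivWithinAt_iff_tendsto_slope' self_notMem_Iio).1
      (hf.hasDerivWithinAt_leftDeriv_of_mem_interior hx)
  · rw [h]
    exact (hasDerivWithinAt_iff_tendsto_slope' self_notMem_Ioi).1
      (hf.hasDerivWithinAt_rightDeriv_of_mem_interior hx)

theorem integral_leftDeriv_eq_sub (hf : ConvexOn ℝ S f) {a b : ℝ} (hab : a ≤ b)
    (hS : Icc a b ⊆ S) (hc : ContinuousOn f (Icc a b))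
    (hi : IntervalIntegrable (fun x ↦ derivWithin f (Iio x) x) volume a b) :
    ∫ x in a..b, derivWithin f (Iio x) x = f b - f a := by
  refine integral_eq_of_hasDerivAt_off_countable_of_le _ _ hab
    hf.countable_leftDeriv_lt_rightDeriv hc (fun x hx ↦ ?_) hi
  have hxS : x ∈ interior S := interior_mono hS (by rw [interior_Icc]; exact hx.1)
  exact hf.hasDerivAt_leftDeriv hxS <|
    (hf.leftDeriv_le_rightDeriv_of_mem_interior hxS).antisymm (not_lt.1 fun h ↦ hx.2 ⟨hxS, h⟩)

end interior

section Iic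

variable {f : ℝ → ℝ} {c : ℝ}

theorem tendsto_leftDeriv_atBot (hf : ConvexOn ℝ (Iic c) f)
    (hmono : MonotoneOn f (Iic c)) (hbdd : BddBelow (f '' Iic c)) :
    Tendsto (fun x ↦ derivWithin f (Iio x) x) atBot (𝓝 0) := by
  have hg : Monotone fun x ↦ f (min x c) := fun x y hxy ↦
    hmono (min_le_right x c) (min_le_right y c) (min_le_min_right c hxy)
  have hgbdd : BddBelow (range fun x ↦ f (min x c)) :=
    hbdd.mono (range_subset_iff.2 fun x ↦ mem_image_of_mem f (min_le_right x c))
  have hlim := tendsto_atBot_ciInf hg hgbdd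
  have hdiff : Tendsto (fun x ↦ f (min (x + 1) c) - f (min x c)) atBot (𝓝 0) := by
    simpa using (hlim.comp (tendsto_atBot_add_const_right _ 1 tendsto_id)).sub hlim
  refine squeeze_zero' ?_ ?_ hdiff
  · filter_upwards [eventually_le_atBot c] with x hx
    exact (hmono.mono (Iio_subset_Iic_self.trans (Iic_subset_Iic.2 hx))).derivWithin_nonneg
  · filter_upwards [eventually_le_atBot (c - 1)] with x hx
    have hx' : x ∈ interior (Iic c) := by rw [interior_Iic]; exact mem_Iio.2 (by linarith)
    have hslope := (hf.leftDeriv_le_rightDeriv_of_mem_interior hx').trans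
      (hf.rightDeriv_le_slope_of_mem_interior hx' (mem_Iic.2 (by linarith : x + 1 ≤ c))
        (by linarith))
    rw [min_eq_left (by linarith : x + 1 ≤ c), min_eq_left (by linarith : x ≤ c)]
    simpa [slope_def_field] using hslope

lemma monotoneOn_leftDeriv_Iic (hf : ConvexOn ℝ (Iic c) f)
    (hd : DifferentiableWithinAt ℝ f (Iio c) c) :
    MonotoneOn (fun x ↦ derivWithin f (Iio x) x) (Iic c) := by
  intro x hx y hy hxy
  rcases hxy.eq_or_lt with rfl | hxy
  · rfl
  have hx' : x ∈ interior (Iic c) := by rw [interior_Iic]; exact hxy.trans_le hy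
  rcases (mem_Iic.1 hy).eq_or_lt with rfl | hyc
  · exact (hf.leftDeriv_le_rightDeriv_of_mem_interior hx').trans <|
      (hf.rightDeriv_le_slope_of_mem_interior hx' hy hxy).trans
        (hf.slope_le_leftDeriv hx hy hxy hd)
  · exact hf.monotoneOn_leftDeriv hx' (by rw [interior_Iic]; exact hyc) hxy.le

theorem integral_leftDeriv_Iic (hf : ConvexOn ℝ (Iic c) f)
    (hd : DifferentiableWithinAt ℝ f (Iio c) c) {t : ℝ} (ht : t ≤ c) :
    ∫ x in t..c, derivWithin f (Iio x) x = f c - f t := by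
  refine hf.integral_leftDeriv_eq_sub ht Icc_subset_Iic_self ?_ ?_
  · exact (hf.continuousOn_Iic hd.hasDerivWithinAt.Iic_of_Iio.continuousWithinAt).mono
      Icc_subset_Iic_self
  · exact ((hf.monotoneOn_leftDeriv_Iic hd).mono
      (uIcc_of_le ht ▸ Icc_subset_Iic_self)).intervalIntegrable

end Iic

end ConvexOn

theorem setIntegral_Ici_max_neg {μ : Measure ℝ} [IsLocallyFiniteMeasure μ]
    (hμ : μ (Ici 0) ≠ ⊤) (t : ℝ) :
    ∫ s in Ici 0, max t (-s) ∂μ =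
      t * μ.real (Ici 0) + ∫ s in Ico 0 (-t), (-t - s) ∂μ := by
  have hsplit :
      (fun s ↦ max t (-s)) = fun s ↦ t + (Iio (-t)).indicator (fun s ↦ -t - s) s := by
    ext s
    by_cases hs : s < -t
    · rw [indicator_of_mem (show s ∈ Iio (-t) from hs), max_eq_right (by linarith)]
      ring
    · rw [indicator_of_notMem (show s ∉ Iio (-t) from hs), max_eq_left (by linarith), add_zero]
  rw [hsplit, integral_add (integrableOn_const hμ).integrable, setIntegral_const, smul_eq_mul,
    mul_comm, setIntegral_indicator measurableSet_Iio, Ici_inter_Iio]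
  rw [integrable_indicator_iff measurableSet_Iio, IntegrableOn,
    Measure.restrict_restrict measurableSet_Iio, Iio_inter_Ici]
  exact (continuous_const.sub continuous_id).integrableOn_Icc.mono_set Ico_subset_Icc_self

theorem StieltjesFunction.setIntegral_Ico_sub_eq_intervalIntegral (f : StieltjesFunction ℝ)
    {a b : ℝ} (hab : a ≤ b) :
    ∫ s in Ico a b, (b - s) ∂f.measure = ∫ v in a..b, (f v - Function.leftLim f a) := by
  have hint : IntegrableOn (fun s ↦ b - s) (Ico a b) f.measure :=
    (continuous_const.sub continuous_id).integrableOn_Icc.mono_set Ico_subset_Icc_self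
  have hnonneg : 0 ≤ᵐ[f.measure.restrict (Ico a b)] fun s ↦ b - s :=
    (ae_restrict_mem measurableSet_Ico).mono fun s hs ↦ sub_nonneg.2 hs.2.le
  set φ := fun v ↦ max (f v - Function.leftLim f a) 0
  have hlevel : ∀ u ∈ Ioi (0 : ℝ),
      (f.measure.restrict (Ico a b)).real {s | u ≤ b - s} = φ (b - u) := by
    intro u hu
    have hset : {s | u ≤ b - s} ∩ Ico a b = Icc a (b - u) := by
      ext s
      simp only [mem_inter_iff, mem_ofPred_eq, mem_Ico, mem_Icc]
      constructor
      · rintro ⟨h, h1, -⟩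
        exact ⟨h1, by linarith⟩
      · rintro ⟨h1, h⟩
        exact ⟨by linarith, h1, by linarith [mem_Ioi.1 hu]⟩
    rw [measureReal_def, Measure.restrict_apply' measurableSet_Ico, hset, f.measure_Icc,
      ENNReal.toReal_ofReal']
  have hvanish : ∀ u ∈ Ioi 0 \ Ioc 0 (b - a), φ (b - u) = 0 := by
    rintro u ⟨hu0, hu⟩
    have : b - u < a := by
      simp only [mem_Ioc, not_and, not_le] at hu
      linarith [hu hu0]
    exact max_eq_right (sub_nonpos.2 (f.mono.le_leftLim this))
  calc ∫ s in Ico a b, (b - s) ∂f.measure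
      = ∫ u in Ioi 0, φ (b - u) := by
        rw [hint.integral_eq_integral_meas_le hnonneg]
        exact setIntegral_congr_fun _root_.measurableSet_Ioi hlevel
    _ = ∫ u in (0 : ℝ)..(b - a), φ (b - u) := by
        rw [setIntegral_eq_of_subset_of_forall_sdiff_eq_zero _root_.measurableSet_Ioi
          Ioc_subset_Ioi_self hvanish, intervalIntegral.integral_of_le (sub_nonneg.2 hab)]
    _ = ∫ v in a..b, φ v := by simp [intervalIntegral.integral_comp_sub_left φ b]
    _ = ∫ v in a..b, (f v - Function.leftLim f a) := by
        refine intervalIntegral.integral_congr fun v hv ↦ max_eq_left (sub_nonneg.2 ?_)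
        rw [uIcc_of_le hab] at hv
        exact (f.mono.leftLim_le le_rfl).trans (f.mono hv.1)

theorem stmt1_general (χ : ℝ → ℝ)
    (hconv : ConvexOn ℝ (Set.Iic (0 : ℝ)) χ)
    (hmono : MonotoneOn χ (Set.Iic (0 : ℝ)))
    (hbddB : BddBelow (χ '' Set.Iic (0 : ℝ)))
    (h0 : χ 0 = 0)
    (h1 : derivWithin χ (Set.Iio (0 : ℝ)) 0 = 1)
    (f : StieltjesFunction ℝ)
    (hf : ∀ s : ℝ, 0 ≤ s → f s = - derivWithin χ (Set.Iio (-s)) (-s))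
    (hf0 : ∀ s : ℝ, s ≤ 0 → f s = f 0) :
    ∀ t : ℝ, t ≤ 0 → χ t = ∫ s in Set.Ici (0 : ℝ), max t (-s) ∂f.measure := by
  intro t ht
  have hd0 : DifferentiableWithinAt ℝ χ (Iio 0) 0 :=
    differentiableWithinAt_of_derivWithin_ne_zero (h1 ▸ one_ne_zero)
  have hf_atTop : Tendsto f atTop (𝓝 0) := by
    have hD := ((hconv.tendsto_leftDeriv_atBot hmono hbddB).comp tendsto_neg_atTop_atBot).neg
    rw [neg_zero] at hD
    refine hD.congr' ?_
    filter_upwards [eventually_ge_atTop 0] with s hs using (hf s hs).symm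
  have hleftLim : Function.leftLim f 0 = -1 := by
    refine leftLim_eq_of_tendsto (tendsto_const_nhds.congr' ?_)
    filter_upwards [self_mem_nhdsWithin] with s hs
    rw [hf0 s (mem_Iio.1 hs).le, hf 0 le_rfl, neg_zero, h1]
  have hmass : f.measure (Ici 0) = 1 := by
    rw [f.measure_Ici hf_atTop, hleftLim]
    norm_num
  have hχ : ∫ v in (0 : ℝ)..(-t), f v = χ t := by
    rw [intervalIntegral.integral_congr (g := fun v ↦ -derivWithin χ (Iio (-v)) (-v))
        fun v hv ↦ hf v (by rw [uIcc_of_le (neg_nonneg.2 ht)] at hv; exact hv.1),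
      intervalIntegral.integral_neg,
      intervalIntegral.integral_comp_neg (fun x ↦ derivWithin χ (Iio x) x), neg_neg, neg_zero,
      hconv.integral_leftDeriv_Iic hd0 ht, h0]
    ring
  rw [setIntegral_Ici_max_neg (by simp [hmass]) t,
    f.setIntegral_Ico_sub_eq_intervalIntegral (neg_nonneg.2 ht), hleftLim, measureReal_def,
    hmass, intervalIntegral.integral_sub f.mono.intervalIntegrable intervalIntegrable_const, hχ]
  simp

/-- With `χ` nondecreasing, convex, bounded on `(-∞,0]`, `χ 0 = 0`,
left derivative `χ'(0) = 1`, and `g(s) ds = χ''(-s) ds` the Lebesgue–Stieltjes measure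
on `[0,∞)` (given by the Stieltjes function `f s = -χ'(-s)` for `s ≥ 0`, extended
constantly below `0`), we have `χ t = ∫₀^∞ max (t, -s) g(s) ds` for all `t ≤ 0`. -/
theorem stmt1 (χ : ℝ → ℝ)
    (hconv : ConvexOn ℝ (Set.Iic (0 : ℝ)) χ)
    (hmono : MonotoneOn χ (Set.Iic (0 : ℝ)))
    (hbddB : BddBelow (χ '' Set.Iic (0 : ℝ)))
    (hbddA : BddAbove (χ '' Set.Iic (0 : ℝ)))
    (h0 : χ 0 = 0)
    (h1 : derivWithin χ (Set.Iio (0 : ℝ)) 0 = 1)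
    (f : StieltjesFunction ℝ)
    (hf : ∀ s : ℝ, 0 ≤ s → f s = - derivWithin χ (Set.Iio (-s)) (-s))
    (hf0 : ∀ s : ℝ, s ≤ 0 → f s = f 0) :
    ∀ t : ℝ, t ≤ 0 → χ t = ∫ s in Set.Ici (0 : ℝ), max t (-s) ∂f.measure :=
  stmt1_general χ hconv hmono hbddB h0 h1 f hf hf0
end

section
/- Let χ_ℓ : ℝ → ℝ be a sequence of nondecreasing convex functions, each bounded from below, decreasing pointwise to the identity function t ↦ t as ℓ → ∞. Then for every R > 0, the left derivative satisfies χ_ℓ'(-R) → 1 as ℓ → ∞, and consequently the Lebesgue–Stieltjes measure g_ℓ(s) ds = χ_ℓ''(-s) ds on [0,∞) satisfies ∫₀^R g_ℓ(s) ds → 0 as ℓ → ∞. -/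
open Filter MeasureTheory Set Topology

lemma ConvexOn.leftDeriv_mem_Icc_slope {f : ℝ → ℝ} (hf : ConvexOn ℝ univ f) {a x b : ℝ}
    (hax : a < x) (hxb : x < b) :
    derivWithin f (Iio x) x ∈ Icc (slope f a x) (slope f x b) := by
  have hx : x ∈ interior univ := by simp
  exact ⟨hf.slope_le_leftDeriv_of_mem_interior trivial hx hax,
    (hf.leftDeriv_le_rightDeriv_of_mem_interior hx).trans
      (hf.rightDeriv_le_slope_of_mem_interior hx trivial hxb)⟩

lemma tendsto_slope_of_tendsto_id {ι : Type*} {l : Filter ι} {χ : ι → ℝ → ℝ}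
    (hlim : ∀ t, Tendsto (fun i => χ i t) l (𝓝 t)) {a b : ℝ} (hab : a ≠ b) :
    Tendsto (fun i => slope (χ i) a b) l (𝓝 1) := by
  have h := ((hlim b).sub (hlim a)).const_smul (b - a)⁻¹
  rwa [smul_eq_mul, inv_mul_cancel₀ (sub_ne_zero.2 hab.symm)] at h

/-- The left derivative at `x` is squeezed between the secant slopes over `[x - 1, x]` and
`[x, x + 1]`, both of which tend to the slope `1` of the limit. -/
lemma tendsto_leftDeriv_of_tendsto_id {ι : Type*} {l : Filter ι} {χ : ι → ℝ → ℝ}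
    (hconv : ∀ i, ConvexOn ℝ univ (χ i)) (hlim : ∀ t, Tendsto (fun i => χ i t) l (𝓝 t))
    (x : ℝ) :
    Tendsto (fun i => derivWithin (χ i) (Iio x) x) l (𝓝 1) :=
  tendsto_of_tendsto_of_tendsto_of_le_of_le
    (tendsto_slope_of_tendsto_id hlim (sub_one_lt x).ne)
    (tendsto_slope_of_tendsto_id hlim (lt_add_one x).ne)
    (fun i => ((hconv i).leftDeriv_mem_Icc_slope (sub_one_lt x) (lt_add_one x)).1)
    (fun i => ((hconv i).leftDeriv_mem_Icc_slope (sub_one_lt x) (lt_add_one x)).2)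

lemma StieltjesFunction.measure_Icc_of_eq_on_Iic (f : StieltjesFunction ℝ) {a : ℝ}
    (h : ∀ s ≤ a, f s = f a) (b : ℝ) :
    f.measure (Icc a b) = ENNReal.ofReal (f b - f a) := by
  have hleft : Function.leftLim f a = f a :=
    leftLim_eq_of_tendsto <| tendsto_const_nhds.congr' <|
      eventually_nhdsWithin_of_forall fun s hs => (h s (le_of_lt hs)).symm
  rw [f.measure_Icc, hleft]

theorem stmt2_general (χ : ℕ → ℝ → ℝ) (f : ℕ → StieltjesFunction ℝ)
    (hconv : ∀ ℓ, ConvexOn ℝ Set.univ (χ ℓ))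
    (hlim : ∀ t : ℝ, Tendsto (fun ℓ => χ ℓ t) atTop (nhds t))
    (hf : ∀ ℓ, ∀ s : ℝ, 0 ≤ s → f ℓ s = - derivWithin (χ ℓ) (Set.Iio (-s)) (-s))
    (hf0 : ∀ ℓ, ∀ s : ℝ, s ≤ 0 → f ℓ s = f ℓ 0) :
    ∀ R : ℝ, 0 < R →
      Tendsto (fun ℓ => derivWithin (χ ℓ) (Set.Iio (-R)) (-R)) atTop (nhds 1) ∧
      Tendsto (fun ℓ => (f ℓ).measure (Set.Icc 0 R)) atTop (nhds 0) := by
  intro R hR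
  have hderiv := tendsto_leftDeriv_of_tendsto_id hconv hlim
  refine ⟨hderiv (-R), ?_⟩
  have hmeas : ∀ ℓ, (f ℓ).measure (Icc 0 R) = ENNReal.ofReal
      (derivWithin (χ ℓ) (Iio (-0)) (-0) - derivWithin (χ ℓ) (Iio (-R)) (-R)) := fun ℓ => by
    rw [(f ℓ).measure_Icc_of_eq_on_Iic (hf0 ℓ), hf ℓ R hR.le, hf ℓ 0 le_rfl, neg_sub_neg]
  simp_rw [hmeas]
  simpa using ENNReal.tendsto_ofReal ((hderiv (-0)).sub (hderiv (-R)))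

/-- If `χ ℓ : ℝ → ℝ` is a sequence of nondecreasing convex functions,
each bounded from below, decreasing pointwise to the identity as `ℓ → ∞`, then for
every `R > 0` the left derivatives satisfy `χ ℓ '(-R) → 1`, and consequently the
Lebesgue–Stieltjes measures `g ℓ (s) ds = χ ℓ ''(-s) ds` on `[0,∞)` (given by the
Stieltjes functions `f ℓ s = -χ ℓ '(-s)` for `s ≥ 0`, extended constantly below `0`)
satisfy `∫₀^R g ℓ (s) ds → 0`. -/
theorem stmt2 (χ : ℕ → ℝ → ℝ) (f : ℕ → StieltjesFunction ℝ)
    (hconv : ∀ ℓ, ConvexOn ℝ Set.univ (χ ℓ))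
    (hmono : ∀ ℓ, Monotone (χ ℓ))
    (hbdd : ∀ ℓ, BddBelow (Set.range (χ ℓ)))
    (hdec : ∀ t : ℝ, Antitone fun ℓ => χ ℓ t)
    (hlim : ∀ t : ℝ, Tendsto (fun ℓ => χ ℓ t) atTop (nhds t))
    (hf : ∀ ℓ, ∀ s : ℝ, 0 ≤ s → f ℓ s = - derivWithin (χ ℓ) (Set.Iio (-s)) (-s))
    (hf0 : ∀ ℓ, ∀ s : ℝ, s ≤ 0 → f ℓ s = f ℓ 0) :
    ∀ R : ℝ, 0 < R →
      Tendsto (fun ℓ => derivWithin (χ ℓ) (Set.Iio (-R)) (-R)) atTop (nhds 1) ∧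
      Tendsto (fun ℓ => (f ℓ).measure (Set.Icc 0 R)) atTop (nhds 0) :=
  stmt2_general χ f hconv hlim hf hf0
end

section
/- Let χ : ℝ → ℝ be convex, nondecreasing, and bounded from below, and let u be a plurisubharmonic function on a domain Ω ⊆ ℂⁿ and v a plurisubharmonic (in particular, real-valued) smooth function on Ω such that χ has Lipschitz constant at most 1 (e.g. χ(t) ≤ t + C and χ decreasing to identity gives χ' ≤ 1). Then χ ∘ (u − v) + v is plurisubharmonic on Ω. In particular, max(u, v − ℓ) is plurisubharmonic for every ℓ. -/
open Filter

section Aux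

open Complex Polynomial Real

lemma circle_laurent_to_poly (c : ℤ →₀ ℂ) :
    ∃ p : Polynomial ℂ, ∀ θ : ℂ, ‖θ‖ = 1 →
      (p.eval θ).re = (∑ k ∈ c.support, c k * θ ^ (k : ℤ)).re := by
  refine ⟨∑ k ∈ c.support, Polynomial.C (if 0 ≤ k then c k else (starRingEnd ℂ) (c k)) *
      Polynomial.X ^ k.natAbs, fun θ hθ => ?_⟩
  have hinv : (starRingEnd ℂ) θ = θ⁻¹ := by
    have h := Complex.mul_conj θ
    rw [Complex.normSq_eq_norm_sq, hθ] at h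
    simp only [one_pow, Complex.ofReal_one] at h
    exact (inv_eq_of_mul_eq_one_right h).symm
  rw [Polynomial.eval_finset_sum]
  rw [Complex.re_sum, Complex.re_sum]
  refine Finset.sum_congr rfl fun k _ => ?_
  simp only [Polynomial.eval_mul, Polynomial.eval_C, Polynomial.eval_pow, Polynomial.eval_X]
  rcases le_or_gt 0 k with hk | hk
  · rw [if_pos hk]
    congr 2
    rw [← zpow_natCast, Int.natAbs_of_nonneg hk]
  · rw [if_neg (not_le.mpr hk)]
    have h1 : (starRingEnd ℂ) (c k * θ ^ (k : ℤ)) = (starRingEnd ℂ) (c k) * θ ^ (k.natAbs) := by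
      rw [map_mul, map_zpow₀, hinv, inv_zpow, ← zpow_neg, ← zpow_natCast]
      congr 2
      omega
    rw [← Complex.conj_re (c k * θ ^ (k:ℤ)), h1]

lemma circle_poly_approx (φ : ℂ → ℝ) (hφ : Continuous φ) {ε : ℝ} (hε : 0 < ε) :
    ∃ p : Polynomial ℂ, ∀ θ : ℂ, ‖θ‖ = 1 → |φ θ - (p.eval θ).re| ≤ ε := by
  haveI : Fact (0 < 2 * Real.pi) := ⟨by positivity⟩
  set h : C(AddCircle (2 * Real.pi), ℂ) :=
    ⟨fun x => (φ ((AddCircle.toCircle x : ℂ)) : ℂ),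
      Complex.continuous_ofReal.comp (hφ.comp
        (continuous_subtype_val.comp AddCircle.continuous_toCircle))⟩ with hh
  have hmem : h ∈ (Submodule.span ℂ (Set.range (@fourier (2 * Real.pi)))).topologicalClosure := by
    rw [span_fourier_closure_eq_top]; trivial
  rw [← SetLike.mem_coe, Submodule.topologicalClosure_coe, Metric.mem_closure_iff] at hmem
  obtain ⟨g, hg_mem, hg_dist⟩ := hmem ε hε
  rw [SetLike.mem_coe, Finsupp.mem_span_range_iff_exists_finsupp] at hg_mem
  obtain ⟨c, rfl⟩ := hg_mem
  obtain ⟨p, hp⟩ := circle_laurent_to_poly c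
  refine ⟨p, fun θ hθ => ?_⟩
  set τ : ℝ := θ.arg with hτ
  have hexp : Complex.exp ((τ : ℂ) * Complex.I) = θ := by
    have := Complex.norm_mul_exp_arg_mul_I θ
    rwa [hθ, Complex.ofReal_one, one_mul] at this
  set x : AddCircle (2 * Real.pi) := (τ : AddCircle (2 * Real.pi)) with hx
  have hhx : h x = (φ θ : ℂ) := by
    rw [hh]
    simp only [ContinuousMap.coe_mk]
    congr 2
    rw [hx, AddCircle.toCircle_apply_mk, Circle.coe_exp]
    have h2 : 2 * Real.pi / (2 * Real.pi) * τ = τ := by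
      rw [div_self (by positivity : (2:ℝ) * Real.pi ≠ 0), one_mul]
    rw [h2, hexp]
  have hfour : ∀ k : ℤ, fourier k x = θ ^ (k : ℤ) := by
    intro k
    rw [hx, fourier_coe_apply, ← hexp, ← Complex.exp_int_mul]
    congr 1
    have hπ : (Real.pi : ℂ) ≠ 0 := Complex.ofReal_ne_zero.mpr Real.pi_ne_zero
    field_simp
    push_cast
    ring
  have hgx : (c.sum fun k a => a • fourier k) x = ∑ k ∈ c.support, c k * θ ^ (k : ℤ) := by
    rw [Finsupp.sum, ContinuousMap.sum_apply]
    refine Finset.sum_congr rfl fun k _ => ?_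
    rw [ContinuousMap.smul_apply, hfour k, smul_eq_mul]
  have hd := ContinuousMap.dist_apply_le_dist (f := h) (g := c.sum fun k a => a • fourier k) x
  have hbound : ‖(φ θ : ℂ) - ∑ k ∈ c.support, c k * θ ^ (k : ℤ)‖ ≤ ε := by
    rw [← hhx, ← hgx]
    calc ‖h x - (c.sum fun k a => a • fourier k) x‖
        = dist (h x) ((c.sum fun k a => a • fourier k) x) := (Complex.dist_eq _ _).symm
      _ ≤ dist h (c.sum fun k a => a • fourier k) := hd
      _ ≤ ε := hg_dist.le
  rw [hp θ hθ]
  calc |φ θ - (∑ k ∈ c.support, c k * θ ^ (k : ℤ)).re|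
      = |((φ θ : ℂ) - ∑ k ∈ c.support, c k * θ ^ (k : ℤ)).re| := by
        simp [Complex.sub_re]
    _ ≤ ‖(φ θ : ℂ) - ∑ k ∈ c.support, c k * θ ^ (k : ℤ)‖ := Complex.abs_re_le_norm _
    _ ≤ ε := hbound

lemma exists_subgrad (χ : ℝ → ℝ) (hχconv : ConvexOn ℝ Set.univ χ) (hχmono : Monotone χ)
    (hχlip : ∀ s t : ℝ, s ≤ t → χ t - χ s ≤ t - s) (t₀ : ℝ) :
    ∃ s : ℝ, 0 ≤ s ∧ s ≤ 1 ∧ ∀ t : ℝ, s * (t - t₀) ≤ χ t - χ t₀ := by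
  set S : Set ℝ := (fun h => (χ (t₀ + h) - χ t₀) / h) '' Set.Ioi (0 : ℝ) with hS
  have hne : S.Nonempty := ⟨(χ (t₀ + 1) - χ t₀) / 1, ⟨1, by norm_num, rfl⟩⟩
  have hlb : ∀ a ∈ S, (0 : ℝ) ≤ a := by
    rintro a ⟨h, hh, rfl⟩
    exact div_nonneg (sub_nonneg.mpr (hχmono (by linarith [Set.mem_Ioi.mp hh]))) (le_of_lt hh)
  have hbdd : BddBelow S := ⟨0, hlb⟩
  refine ⟨sInf S, le_csInf hne hlb, ?_, ?_⟩
  · have hmem : (χ (t₀ + 1) - χ t₀) / 1 ∈ S := ⟨1, by norm_num, rfl⟩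
    have h1 : (χ (t₀ + 1) - χ t₀) / 1 ≤ 1 := by
      rw [div_one]
      have := hχlip t₀ (t₀ + 1) (by linarith)
      linarith
    exact le_trans (csInf_le hbdd hmem) h1
  · intro t
    rcases lt_trichotomy t t₀ with hlt | heq | hgt
    · have key : ∀ a ∈ S, (χ t₀ - χ t) / (t₀ - t) ≤ a := by
        rintro a ⟨h, hh, rfl⟩
        have := hχconv.slope_mono_adjacent (Set.mem_univ t) (Set.mem_univ (t₀ + h)) hlt
          (by linarith [Set.mem_Ioi.mp hh])
        simpa using this
      have h2 : (χ t₀ - χ t) / (t₀ - t) ≤ sInf S := le_csInf hne key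
      have h3 : χ t₀ - χ t ≤ sInf S * (t₀ - t) := by
        rw [div_le_iff₀ (by linarith : (0:ℝ) < t₀ - t)] at h2
        linarith
      nlinarith
    · subst heq; simp
    · have hmem : (χ (t₀ + (t - t₀)) - χ t₀) / (t - t₀) ∈ S := ⟨t - t₀, by simp [hgt], rfl⟩
      have h2 : sInf S ≤ (χ t - χ t₀) / (t - t₀) := by
        have := csInf_le hbdd hmem
        rwa [show t₀ + (t - t₀) = t by ring] at this
      rw [le_div_iff₀ (by linarith : (0:ℝ) < t - t₀)] at h2
      linarith

end Aux

/-- A function `u` with values in `[−∞, ∞]` is plurisubharmonic on `Ω ⊆ ℂⁿ` if it is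
upper semicontinuous on `Ω` and satisfies the sub-mean value property on every closed
complex disc contained in `Ω`, expressed via harmonic majorization by real parts of
complex polynomials on the boundary circle. -/
def PlurisubharmonicOn {n : ℕ} (u : (Fin n → ℂ) → EReal) (Ω : Set (Fin n → ℂ)) : Prop :=
  UpperSemicontinuousOn u Ω ∧
    ∀ z ∈ Ω, ∀ w : Fin n → ℂ,
      (∀ θ : ℂ, ‖θ‖ ≤ 1 → z + θ • w ∈ Ω) →
      ∀ p : Polynomial ℂ,
        (∀ θ : ℂ, ‖θ‖ = 1 → u (z + θ • w) ≤ (((p.eval θ).re : ℝ) : EReal)) →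
        u z ≤ (((p.eval 0).re : ℝ) : EReal)

/-- Let `χ : ℝ → ℝ` be convex, nondecreasing, bounded from below and
with Lipschitz constant at most `1`, let `u` be plurisubharmonic on a domain
`Ω ⊆ ℂⁿ` and `v` a smooth plurisubharmonic (real-valued) function on `Ω`. Then
`χ ∘ (u − v) + v` (with the convention `χ(−∞) = inf χ`) is plurisubharmonic on `Ω`;
in particular `max (u, v − ℓ)` is plurisubharmonic for every `ℓ`. -/
theorem stmt13 {n : ℕ} (Ω : Set (Fin n → ℂ)) (hΩ : IsOpen Ω) (hconn : IsConnected Ω)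
    (χ : ℝ → ℝ) (hχconv : ConvexOn ℝ Set.univ χ) (hχmono : Monotone χ)
    (hχbdd : BddBelow (Set.range χ))
    (hχlip : ∀ s t : ℝ, s ≤ t → χ t - χ s ≤ t - s)
    (u : (Fin n → ℂ) → EReal) (hu : PlurisubharmonicOn u Ω) (hutop : ∀ x, u x < ⊤)
    (v : (Fin n → ℂ) → ℝ) (hv : ContDiff ℝ (⊤ : ℕ∞) v)
    (hvpsh : PlurisubharmonicOn (fun x => ((v x : ℝ) : EReal)) Ω) :
    PlurisubharmonicOn
      (fun x =>
        (((if u x = ⊥ then sInf (Set.range χ) else χ ((u x).toReal - v x)) + v x : ℝ)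
          : EReal)) Ω ∧
    ∀ ℓ : ℝ, PlurisubharmonicOn (fun x => max (u x) (((v x - ℓ : ℝ) : EReal))) Ω := by
  obtain ⟨huusc, humean⟩ := hu
  obtain ⟨hvusc, hvmean⟩ := hvpsh
  have hvc : Continuous v := hv.continuous
  have hmle : ∀ t, sInf (Set.range χ) ≤ χ t := fun t => csInf_le hχbdd ⟨t, rfl⟩
  set m := sInf (Set.range χ) with hm
  constructor
  · constructor
    · -- upper semicontinuity of the composition
      have hFusc : UpperSemicontinuousOn
          (fun x' => (if u x' = ⊥ then m else χ ((u x').toReal - v x')) + v x') Ω := by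
        intro x hx y hy
        have hy' : (if u x = ⊥ then m else χ ((u x).toReal - v x)) + v x < y := hy
        by_cases hbot : u x = ⊥
        · rw [if_pos hbot] at hy'
          set ε := (y - (m + v x)) / 2 with hεdef
          have hεpos : 0 < ε := by rw [hεdef]; linarith
          set δ := ε / 2 with hδdef
          have hδpos : 0 < δ := by rw [hδdef]; linarith
          have hvd : ∀ᶠ x' in nhdsWithin x Ω, v x' ∈ Set.Ioo (v x - δ) (v x + δ) := by
            have h1 : Set.Ioo (v x - δ) (v x + δ) ∈ nhds (v x) :=
              Ioo_mem_nhds (by linarith) (by linarith)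
            exact Filter.Eventually.filter_mono nhdsWithin_le_nhds
              (hvc.continuousAt.eventually_mem h1)
          obtain ⟨a, ⟨T, rfl⟩, haT⟩ := exists_lt_of_csInf_lt
            (⟨χ 0, 0, rfl⟩ : (Set.range χ).Nonempty)
            (show sInf (Set.range χ) < m + ε by rw [← hm]; linarith)
          have hA : ∀ᶠ x' in nhdsWithin x Ω, u x' < ((T + v x - δ : ℝ) : EReal) :=
            huusc x hx _ (by show u x < _; rw [hbot]; exact EReal.bot_lt_coe _)
          filter_upwards [hA, hvd] with x' hA' hv'
          show (if u x' = ⊥ then m else χ ((u x').toReal - v x')) + v x' < y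
          by_cases hbot' : u x' = ⊥
          · rw [if_pos hbot']
            have h2 : v x' < v x + δ := hv'.2
            have h3 : δ ≤ ε := by rw [hδdef]; linarith
            linarith
          · rw [if_neg hbot']
            have hT' : (u x').toReal ≤ T + v x - δ := by
              have := EReal.toReal_le_toReal hA'.le hbot' (EReal.coe_ne_top _)
              rwa [EReal.toReal_coe] at this
            have h5 : (u x').toReal - v x' < T := by
              have := hv'.1
              linarith
            have h6 : χ ((u x').toReal - v x') ≤ χ T := hχmono h5.le
            have h7 : v x' < v x + δ := hv'.2
            have h3 : δ ≤ ε := by rw [hδdef]; linarith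
            linarith
        · rw [if_neg hbot] at hy'
          set ε := (y - (χ ((u x).toReal - v x) + v x)) / 2 with hεdef
          have hεpos : 0 < ε := by rw [hεdef]; linarith
          set δ := ε / 2 with hδdef
          have hδpos : 0 < δ := by rw [hδdef]; linarith
          have hvd : ∀ᶠ x' in nhdsWithin x Ω, v x' ∈ Set.Ioo (v x - δ) (v x + δ) := by
            have h1 : Set.Ioo (v x - δ) (v x + δ) ∈ nhds (v x) :=
              Ioo_mem_nhds (by linarith) (by linarith)
            exact Filter.Eventually.filter_mono nhdsWithin_le_nhds
              (hvc.continuousAt.eventually_mem h1)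
          have hA : ∀ᶠ x' in nhdsWithin x Ω, u x' < (((u x).toReal + δ : ℝ) : EReal) := by
            apply huusc x hx
            have h1 : u x = (((u x).toReal : ℝ) : EReal) :=
              (EReal.coe_toReal (hutop x).ne hbot).symm
            conv_lhs => rw [h1]
            exact EReal.coe_lt_coe_iff.mpr (by linarith)
          filter_upwards [hA, hvd] with x' hA' hv'
          show (if u x' = ⊥ then m else χ ((u x').toReal - v x')) + v x' < y
          by_cases hbot' : u x' = ⊥
          · rw [if_pos hbot']
            have h2 : m ≤ χ ((u x).toReal - v x) := hmle _
            have h7 : v x' < v x + δ := hv'.2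
            have h3 : δ ≤ ε := by rw [hδdef]; linarith
            linarith
          · rw [if_neg hbot']
            have hT' : (u x').toReal ≤ (u x).toReal + δ := by
              have := EReal.toReal_le_toReal hA'.le hbot' (EReal.coe_ne_top _)
              rwa [EReal.toReal_coe] at this
            have h5 : (u x').toReal - v x' ≤ ((u x).toReal - v x) + 2*δ := by
              have := hv'.1
              linarith
            have h6 : χ ((u x').toReal - v x') ≤ χ (((u x).toReal - v x) + 2*δ) := hχmono h5
            have h7 : χ (((u x).toReal - v x) + 2*δ) ≤ χ ((u x).toReal - v x) + 2*δ := by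
              have := hχlip ((u x).toReal - v x) (((u x).toReal - v x) + 2*δ) (by linarith)
              linarith
            have h8 : v x' < v x + δ := hv'.2
            have h3 : δ = ε / 2 := hδdef
            linarith
      exact continuous_coe_real_ereal.comp_upperSemicontinuousOn hFusc
        EReal.coe_strictMono.monotone
    · -- sub-mean value property of the composition
      intro z hz w hdisc p hp
      have hpR : ∀ θ : ℂ, ‖θ‖ = 1 →
          (if u (z + θ • w) = ⊥ then m else χ ((u (z + θ • w)).toReal - v (z + θ • w)))
            + v (z + θ • w) ≤ (p.eval θ).re :=
        fun θ hθ => EReal.coe_le_coe_iff.mp (hp θ hθ)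
      refine EReal.coe_le_coe_iff.mpr ?_
      show (if u z = ⊥ then m else χ ((u z).toReal - v z)) + v z ≤ (p.eval 0).re
      have key0 : ∀ c : ℝ, (∀ t, c ≤ χ t) → c + v z ≤ (p.eval 0).re := by
        intro c hc
        have hcm : c ≤ m := le_csInf ⟨χ 0, 0, rfl⟩ (by rintro a ⟨t, rfl⟩; exact hc t)
        have hb : ∀ θ : ℂ, ‖θ‖ = 1 →
            ((fun x => ((v x : ℝ) : EReal)) (z + θ • w))
              ≤ ((((p - Polynomial.C ((c : ℝ) : ℂ)).eval θ).re : ℝ) : EReal) := by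
          intro θ hθ
          refine EReal.coe_le_coe_iff.mpr ?_
          have h1 := hpR θ hθ
          have h2 : c ≤ (if u (z + θ • w) = ⊥ then m
              else χ ((u (z + θ • w)).toReal - v (z + θ • w))) := by
            split
            · exact hcm
            · exact hc _
          have h3 : ((p - Polynomial.C ((c:ℝ):ℂ)).eval θ).re = (p.eval θ).re - c := by
            simp [Polynomial.eval_sub, Polynomial.eval_C, Complex.sub_re, Complex.ofReal_re]
          rw [h3]
          linarith
        have h4 := hvmean z hz w hdisc (p - Polynomial.C ((c:ℝ):ℂ)) hb
        have h5 : ((p - Polynomial.C ((c:ℝ):ℂ)).eval 0).re = (p.eval 0).re - c := by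
          simp [Polynomial.eval_sub, Polynomial.eval_C, Complex.sub_re, Complex.ofReal_re]
        have h6 : v z ≤ (p.eval 0).re - c := by
          have := EReal.coe_le_coe_iff.mp h4
          rwa [h5] at this
        linarith
      by_cases hbz : u z = ⊥
      · rw [if_pos hbz]
        exact key0 m hmle
      · rw [if_neg hbz]
        set t₀ := (u z).toReal - v z with ht₀
        obtain ⟨s, hs0, hs1, hsub⟩ := exists_subgrad χ hχconv hχmono hχlip t₀
        rcases eq_or_lt_of_le hs0 with hseq | hspos
        · have hc : ∀ t, χ t₀ ≤ χ t := by
            intro t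
            have := hsub t
            rw [← hseq] at this
            linarith
          exact key0 (χ t₀) hc
        · have hne_top : u z ≠ ⊤ := (hutop z).ne
          have hsne : s ≠ 0 := ne_of_gt hspos
          have key : ∀ ε : ℝ, 0 < ε → χ t₀ + v z ≤ (p.eval 0).re + 2 * ε := by
            intro ε hε
            have hφc : Continuous (fun θ : ℂ => v (z + θ • w)) :=
              hvc.comp (continuous_const.add (continuous_id.smul continuous_const))
            obtain ⟨r, hr⟩ := circle_poly_approx _ hφc hε
            set c := χ t₀ - s * t₀ with hcdef
            set q : Polynomial ℂ := Polynomial.C ((s⁻¹ : ℝ) : ℂ) *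
              (p - Polynomial.C ((c : ℝ) : ℂ) - Polynomial.C (((1 : ℝ) - s : ℝ) : ℂ) *
                (r - Polynomial.C ((ε : ℝ) : ℂ))) with hq
            have hqre : ∀ θ : ℂ, (q.eval θ).re
                = s⁻¹ * ((p.eval θ).re - c - (1 - s) * ((r.eval θ).re - ε)) := by
              intro θ
              simp [hq, Polynomial.eval_mul, Polynomial.eval_sub, Polynomial.eval_C,
                Complex.re_ofReal_mul, Complex.sub_re, Complex.ofReal_re]
            have hub : ∀ θ : ℂ, ‖θ‖ = 1 →
                u (z + θ • w) ≤ (((q.eval θ).re : ℝ) : EReal) := by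
              intro θ hθ
              by_cases hb : u (z + θ • w) = ⊥
              · rw [hb]; exact bot_le
              · have hT : (u (z + θ • w)).toReal ≤ (q.eval θ).re := by
                  have h1 := hpR θ hθ
                  rw [if_neg hb] at h1
                  have h2 := hsub ((u (z + θ • w)).toReal - v (z + θ • w))
                  have h3 : (r.eval θ).re - ε ≤ v (z + θ • w) := by
                    have := hr θ hθ
                    rw [abs_le] at this
                    linarith [this.1]
                  have h6 : (1 - s) * ((r.eval θ).re - ε) ≤ (1 - s) * v (z + θ • w) :=
                    mul_le_mul_of_nonneg_left h3 (by linarith)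
                  have h7 : s * (u (z + θ • w)).toReal
                      ≤ (p.eval θ).re - c - (1 - s) * ((r.eval θ).re - ε) := by
                    have hexp : s * ((u (z + θ • w)).toReal - v (z + θ • w) - t₀)
                        = s * (u (z + θ • w)).toReal - s * v (z + θ • w) - s * t₀ := by ring
                    rw [hcdef]
                    nlinarith [h2, h1, h6]
                  rw [hqre θ]
                  have h8 : (u (z + θ • w)).toReal = s⁻¹ * (s * (u (z + θ • w)).toReal) := by
                    field_simp
                  rw [h8]
                  exact mul_le_mul_of_nonneg_left h7 (by positivity)
                calc u (z + θ • w) = (((u (z + θ • w)).toReal : ℝ) : EReal) :=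
                      (EReal.coe_toReal (hutop _).ne hb).symm
                  _ ≤ (((q.eval θ).re : ℝ) : EReal) := EReal.coe_le_coe_iff.mpr hT
            have hTq := humean z hz w hdisc q hub
            have hTq' : (u z).toReal ≤ (q.eval 0).re := by
              have h1 : (((u z).toReal : ℝ) : EReal) = u z := EReal.coe_toReal hne_top hbz
              rw [← h1] at hTq
              exact EReal.coe_le_coe_iff.mp hTq
            have hvb : ∀ θ : ℂ, ‖θ‖ = 1 →
                ((fun x => ((v x : ℝ) : EReal)) (z + θ • w))
                  ≤ ((((r + Polynomial.C ((ε:ℝ):ℂ)).eval θ).re : ℝ) : EReal) := by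
              intro θ hθ
              refine EReal.coe_le_coe_iff.mpr ?_
              have h3 : v (z + θ • w) ≤ (r.eval θ).re + ε := by
                have := hr θ hθ
                rw [abs_le] at this
                linarith [this.1]
              have h4 : ((r + Polynomial.C ((ε:ℝ):ℂ)).eval θ).re = (r.eval θ).re + ε := by
                simp [Polynomial.eval_add, Polynomial.eval_C, Complex.add_re, Complex.ofReal_re]
              rw [h4]
              exact h3
            have hvz := hvmean z hz w hdisc (r + Polynomial.C ((ε:ℝ):ℂ)) hvb
            have hvz' : v z ≤ (r.eval 0).re + ε := by
              have h5 := EReal.coe_le_coe_iff.mp hvz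
              simpa [Polynomial.eval_add, Polynomial.eval_C, Complex.add_re,
                Complex.ofReal_re] using h5
            have h1 : s * (u z).toReal ≤ s * (q.eval 0).re :=
              mul_le_mul_of_nonneg_left hTq' hs0
            have h2 : s * (q.eval 0).re
                = (p.eval 0).re - c - (1 - s) * ((r.eval 0).re - ε) := by
              rw [hqre 0]
              field_simp
            have h3 : (1 - s) * v z ≤ (1 - s) * ((r.eval 0).re + ε) :=
              mul_le_mul_of_nonneg_left hvz' (by linarith)
            have h4 : (0:ℝ) ≤ s * ε := mul_nonneg hs0 hε.le
            have h5 : χ t₀ = s * t₀ + c := by rw [hcdef]; ring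
            have h9 : s * t₀ + c + v z = s * (u z).toReal + (1 - s) * v z + c := by
              rw [ht₀]; ring
            have h10 : (1 - s) * ((r.eval 0).re + ε) - (1 - s) * ((r.eval 0).re - ε)
                = 2 * ε - 2 * (s * ε) := by ring
            rw [h5]
            linarith
          by_contra hcon
          push_neg at hcon
          have := key ((χ t₀ + v z - (p.eval 0).re) / 4) (by linarith)
          linarith
  · -- the max part
    intro ℓ
    constructor
    · intro x hx y hy
      have h1 : u x < y := lt_of_le_of_lt (le_max_left _ _) hy
      have h2 : ((v x - ℓ : ℝ) : EReal) < y := lt_of_le_of_lt (le_max_right _ _) hy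
      have e1 := huusc x hx y h1
      have hcont : Continuous (fun x' => (((v x' - ℓ : ℝ)) : EReal)) :=
        continuous_coe_real_ereal.comp (hvc.sub continuous_const)
      have h3 : Set.Iio y ∈ nhds (((v x - ℓ : ℝ) : EReal)) := isOpen_Iio.mem_nhds h2
      have e2 : ∀ᶠ x' in nhdsWithin x Ω, ((v x' - ℓ : ℝ) : EReal) < y :=
        Filter.Eventually.filter_mono nhdsWithin_le_nhds (hcont.continuousAt.eventually_mem h3)
      filter_upwards [e1, e2] with x' p1 p2
      exact max_lt p1 p2
    · intro z hz w hdisc p hp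
      refine max_le ?_ ?_
      · exact humean z hz w hdisc p (fun θ hθ => le_trans (le_max_left _ _) (hp θ hθ))
      · have hb : ∀ θ : ℂ, ‖θ‖ = 1 →
            ((fun x => ((v x : ℝ) : EReal)) (z + θ • w))
              ≤ ((((p + Polynomial.C ((ℓ:ℝ):ℂ)).eval θ).re : ℝ) : EReal) := by
          intro θ hθ
          refine EReal.coe_le_coe_iff.mpr ?_
          have h1 : ((v (z + θ • w) - ℓ : ℝ) : EReal) ≤ (((p.eval θ).re : ℝ) : EReal) :=
            le_trans (le_max_right _ _) (hp θ hθ)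
          have h2 : v (z + θ • w) - ℓ ≤ (p.eval θ).re := EReal.coe_le_coe_iff.mp h1
          have h3 : ((p + Polynomial.C ((ℓ:ℝ):ℂ)).eval θ).re = (p.eval θ).re + ℓ := by
            simp [Polynomial.eval_add, Polynomial.eval_C, Complex.add_re, Complex.ofReal_re]
          rw [h3]
          linarith
        have h4 := hvmean z hz w hdisc (p + Polynomial.C ((ℓ:ℝ):ℂ)) hb
        have h5 : v z ≤ (p.eval 0).re + ℓ := by
          have h6 := EReal.coe_le_coe_iff.mp h4
          simpa [Polynomial.eval_add, Polynomial.eval_C, Complex.add_re,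
            Complex.ofReal_re] using h6
        exact EReal.coe_le_coe_iff.mpr (by linarith)
end

section
/- Let φ' be the left derivative of a convex function χ : ℝ → ℝ that is bounded below and nondecreasing. Then lim_{t→−∞} χ'(t) = 0 and, if additionally χ(0) = 0 and χ'(0) = 1, then ∫₀^∞ χ''(−s) ds = 1 in the Lebesgue–Stieltjes sense, i.e., the total variation of χ' on (−∞, 0] equals 1. -/
/-!
The left derivative `χ'` of a nondecreasing function is nonnegative. For a convex `χ` and
`t < 0` it is at most the secant slope `(χ 0 - χ t) / (0 - t)`, which is `O(1 / |t|)` when `χ` is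
bounded below. Hence `χ' → 0` at `-∞`, so the infimum of `χ'` over `(-∞, 0]` is `0`.
-/

open Filter Set Topology

theorem isGLB_image_Iic_of_tendsto_atBot {α β : Type*} [Preorder α] [IsCodirectedOrder α]
    [Nonempty α] [Preorder β] [TopologicalSpace β] [ClosedIciTopology β] {g : α → β} {c : β}
    (hg : Tendsto g atBot (𝓝 c)) (hc : ∀ x, c ≤ g x) (a : α) :
    IsGLB (g '' Iic a) c := by
  refine ⟨by rintro _ ⟨x, -, rfl⟩; exact hc x, fun b hb ↦ ?_⟩
  refine ge_of_tendsto hg ?_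
  filter_upwards [eventually_le_atBot a] with x hx using hb ⟨x, hx, rfl⟩

namespace ConvexOn

variable {f : ℝ → ℝ}

theorem leftDeriv_le_slope (hf : ConvexOn ℝ univ f) {x y : ℝ} (hxy : x < y) :
    derivWithin f (Iio x) x ≤ slope f x y := by
  have hx : x ∈ interior univ := by simp
  exact (hf.leftDeriv_le_rightDeriv_of_mem_interior hx).trans
    (hf.rightDeriv_le_slope_of_mem_interior hx (mem_univ y) hxy)

theorem tendsto_leftDeriv_atBot_zero (hf : ConvexOn ℝ univ f) (hmono : Monotone f)
    (hbdd : BddBelow (range f)) :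
    Tendsto (fun x ↦ derivWithin f (Iio x) x) atBot (𝓝 0) := by
  obtain ⟨m, hm⟩ := hbdd
  have hbound : Tendsto (fun x ↦ (m - f 0) / x) atBot (𝓝 0) :=
    tendsto_const_nhds.div_atBot tendsto_id
  refine tendsto_of_tendsto_of_tendsto_of_le_of_le' tendsto_const_nhds hbound
    (Eventually.of_forall fun x ↦ (hmono.monotoneOn _).derivWithin_nonneg) ?_
  filter_upwards [eventually_lt_atBot 0] with x hx
  calc derivWithin f (Iio x) x ≤ slope f x 0 := hf.leftDeriv_le_slope hx
    _ = (f x - f 0) / x := by rw [slope_def_field, ← neg_div_neg_eq, neg_sub, neg_sub, sub_zero]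
    _ ≤ (m - f 0) / x := div_le_div_of_nonpos_of_le hx.le (by linarith [hm ⟨x, rfl⟩])

end ConvexOn

theorem stmt19_general (χ : ℝ → ℝ)
    (hconv : ConvexOn ℝ Set.univ χ) (hmono : Monotone χ)
    (hbdd : BddBelow (Set.range χ))
    (h1 : derivWithin χ (Set.Iio (0 : ℝ)) 0 = 1) :
    Tendsto (fun t => derivWithin χ (Set.Iio t) t) atBot (nhds 0) ∧
    derivWithin χ (Set.Iio (0 : ℝ)) 0
        - sInf ((fun t => derivWithin χ (Set.Iio t) t) '' Set.Iic (0 : ℝ)) = 1 := by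
  have hlim := hconv.tendsto_leftDeriv_atBot_zero hmono hbdd
  have hinf := isGLB_image_Iic_of_tendsto_atBot hlim
    (fun _ ↦ (hmono.monotoneOn _).derivWithin_nonneg) 0
  refine ⟨hlim, ?_⟩
  rw [h1, hinf.csInf_eq (nonempty_Iic.image _), sub_zero]

/-- first half of Lemma 5.2: Let `χ : ℝ → ℝ` be convex, nondecreasing
and bounded below, with left derivative `χ'` (formalized as `derivWithin χ (Iio t) t`).
Then `χ'(t) → 0` as `t → −∞`, and if additionally `χ 0 = 0` and `χ'(0) = 1`, then
`∫₀^∞ χ''(−s) ds = 1` in the Lebesgue–Stieltjes sense, i.e. the total variation of the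
nondecreasing function `χ'` on `(−∞, 0]`, namely `χ'(0) − inf_{t ≤ 0} χ'(t)`,
equals `1`. -/
theorem stmt19 (χ : ℝ → ℝ)
    (hconv : ConvexOn ℝ Set.univ χ) (hmono : Monotone χ)
    (hbdd : BddBelow (Set.range χ))
    (h0 : χ 0 = 0) (h1 : derivWithin χ (Set.Iio (0 : ℝ)) 0 = 1) :
    Tendsto (fun t => derivWithin χ (Set.Iio t) t) atBot (nhds 0) ∧
    derivWithin χ (Set.Iio (0 : ℝ)) 0
        - sInf ((fun t => derivWithin χ (Set.Iio t) t) '' Set.Iic (0 : ℝ)) = 1 :=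
  stmt19_general χ hconv hmono hbdd h1
end
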